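/- arXiv:2302.06128 — 4 statements merged into one kernel-verified Lean document; each statement's English description precedes it below -/
import Mathlib

section
/- Let η : [t₀, τ₀) → ℝ be differentiable and satisfy the differential inequality η′(t) + a(t)η(t)³ + b(t)η(t)² + c(t)η(t) + d(t) ≥ 0 for all t ∈ [t₀, τ₀), and let y be a solution of the Abel equation (1.1) on [t₀, τ₀) with y(t₀) ≤ η(t₀). Then y(t) ≤ η(t) for all t ∈ [t₀, τ₀). Furthermore, if y(t₀) < η(t₀), then y(t) < η(t) for all t ∈ [t₀, τ₀). -/
/-!
With `w = η - y`, the factorizations `η³ - y³ = (η - y)(η² + ηy + y²)` and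
`η² - y² = (η - y)(η + y)` turn the supersolution inequality for `η` and the equation for `y`
into the linear inequality `w' + g w ≥ 0`, with `g` continuous. For a primitive `G` of `g`,
the function `w · exp G` is then nondecreasing, so `w t ≥ exp (G t₀ - G t) · w t₀`, which
preserves both `w t₀ ≥ 0` and `w t₀ > 0`.
-/

open Set MeasureTheory intervalIntegral

/-- The right-hand side `-(a y³ + b y² + c y + d)` of the Abel equation (1.1). -/
noncomputable def abelRHS (a b c d y : ℝ → ℝ) (t : ℝ) : ℝ :=
  -(a t * y t ^ 3 + b t * y t ^ 2 + c t * y t + d t)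

/-- `y` is a solution of the Abel equation `y' + a y³ + b y² + c y + d = 0` on the set `S`. -/
def IsAbelSolOn (a b c d y : ℝ → ℝ) (S : Set ℝ) : Prop :=
  ∀ t ∈ S, HasDerivWithinAt y (abelRHS a b c d y t) S t

/-- The set of real points of the interval `[t₀, τ)`, `τ` an extended real. -/
def eIco (t₀ : ℝ) (τ : EReal) : Set ℝ := {t : ℝ | t₀ ≤ t ∧ (t : EReal) < τ}

/-- A solution `y` of the Abel equation on `[t₀, t₁) ⊆ [t₀, τ₀)` is noncontinuable if it
cannot be extended to the right as a solution on a larger subinterval of `[t₀, τ₀)`. -/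
def Noncontinuable (a b c d : ℝ → ℝ) (t₀ : ℝ) (τ₀ t₁ : EReal) (y : ℝ → ℝ) : Prop :=
  ¬ ∃ (t₂ : EReal) (z : ℝ → ℝ), t₁ < t₂ ∧ t₂ ≤ τ₀ ∧
      IsAbelSolOn a b c d z (eIco t₀ t₂) ∧ EqOn z y (eIco t₀ t₁)

theorem exists_hasDerivAt_of_continuousOn_Icc {g : ℝ → ℝ} {p q : ℝ}
    (hg : ContinuousOn g (Icc p q)) : ∃ G : ℝ → ℝ, ∀ t ∈ Icc p q, HasDerivAt G (g t) t := by
  rcases le_or_gt p q with hpq | hqp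
  · have hext : Continuous (IccExtend hpq ((Icc p q).domRestrict g)) :=
      hg.domRestrict.Icc_extend'
    refine ⟨fun u ↦ ∫ x in p..u, IccExtend hpq ((Icc p q).domRestrict g) x, fun t ht ↦ ?_⟩
    have h := (hext.integral_hasStrictDerivAt p t).hasDerivAt
    rwa [IccExtend_of_mem hpq _ ht] at h
  · exact ⟨0, fun t ht ↦ absurd (ht.1.trans ht.2) hqp.not_ge⟩

theorem exists_pos_mul_le_of_neg_mul_le_deriv {w w' g : ℝ → ℝ} {p q : ℝ} (hpq : p ≤ q)
    (hg : ContinuousOn g (Icc p q))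
    (hw : ∀ t ∈ Icc p q, HasDerivWithinAt w (w' t) (Icc p q) t)
    (hineq : ∀ t ∈ Ioo p q, -(g t * w t) ≤ w' t) :
    ∃ k > 0, k * w p ≤ w q := by
  obtain ⟨G, hG⟩ := exists_hasDerivAt_of_continuousOn_Icc hg
  have hmono : MonotoneOn (fun t ↦ w t * Real.exp (G t)) (Icc p q) := by
    refine monotoneOn_of_hasDerivWithinAt_nonneg (convex_Icc p q)
      (f' := fun t ↦ (w' t + g t * w t) * Real.exp (G t)) ?_ ?_ ?_
    · exact fun t ht ↦ ((hw t ht).continuousWithinAt).mul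
        (hG t ht).exp.continuousAt.continuousWithinAt
    · rw [interior_Icc]
      intro t ht
      have ht' := Ioo_subset_Icc_self ht
      have h : HasDerivWithinAt (fun t ↦ w t * Real.exp (G t))
          (w' t * Real.exp (G t) + w t * (Real.exp (G t) * g t)) (Ioo p q) t :=
        ((hw t ht').mono Ioo_subset_Icc_self).mul (hG t ht').exp.hasDerivWithinAt
      convert h using 1
      ring
    · rw [interior_Icc]
      exact fun t ht ↦ mul_nonneg (by linarith [hineq t ht]) (Real.exp_pos _).le
  refine ⟨Real.exp (G p - G q), Real.exp_pos _, ?_⟩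
  have h := hmono (left_mem_Icc.2 hpq) (right_mem_Icc.2 hpq) hpq
  rw [Real.exp_sub, div_mul_eq_mul_div, div_le_iff₀ (Real.exp_pos _), mul_comm]
  exact h

theorem Icc_subset_eIco {t₀ t : ℝ} {τ₀ : EReal} (ht : t ∈ eIco t₀ τ₀) :
    Icc t₀ t ⊆ eIco t₀ τ₀ :=
  fun _ hs ↦ ⟨hs.1, (EReal.coe_le_coe_iff.2 hs.2).trans_lt ht.2⟩

theorem neg_mul_sub_le_sub_abelRHS {a b c d η y : ℝ → ℝ} {t v : ℝ}
    (hv : 0 ≤ v + a t * η t ^ 3 + b t * η t ^ 2 + c t * η t + d t) :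
    -((a t * (η t ^ 2 + η t * y t + y t ^ 2) + b t * (η t + y t) + c t) * (η t - y t)) ≤
      v - abelRHS a b c d y t := by
  have h : v - abelRHS a b c d y t
      + (a t * (η t ^ 2 + η t * y t + y t ^ 2) + b t * (η t + y t) + c t) * (η t - y t)
      = v + a t * η t ^ 3 + b t * η t ^ 2 + c t * η t + d t := by
    unfold abelRHS; ring
  linarith

theorem exists_pos_mul_sub_le_of_abel {t₀ : ℝ} {τ₀ : EReal} {a b c d η y : ℝ → ℝ}
    (ha : ContinuousOn a (eIco t₀ τ₀)) (hb : ContinuousOn b (eIco t₀ τ₀))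
    (hc : ContinuousOn c (eIco t₀ τ₀))
    (hη : ∀ t ∈ eIco t₀ τ₀, ∃ v : ℝ, HasDerivWithinAt η v (eIco t₀ τ₀) t ∧
      0 ≤ v + a t * η t ^ 3 + b t * η t ^ 2 + c t * η t + d t)
    (hy : IsAbelSolOn a b c d y (eIco t₀ τ₀)) {t : ℝ} (ht : t ∈ eIco t₀ τ₀) :
    ∃ k > 0, k * (η t₀ - y t₀) ≤ η t - y t := by
  choose! v hv hv_super using hη
  have hsub := Icc_subset_eIco ht
  have hηc : ContinuousOn η (eIco t₀ τ₀) := fun s hs ↦ (hv s hs).continuousWithinAt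
  have hyc : ContinuousOn y (eIco t₀ τ₀) := fun s hs ↦ (hy s hs).continuousWithinAt
  have hg : ContinuousOn
      (fun s ↦ a s * (η s ^ 2 + η s * y s + y s ^ 2) + b s * (η s + y s) + c s)
      (eIco t₀ τ₀) := by
    fun_prop
  exact exists_pos_mul_le_of_neg_mul_le_deriv ht.1 (hg.mono hsub)
    (fun s hs ↦ ((hv s (hsub hs)).sub (hy s (hsub hs))).mono hsub)
    (fun s hs ↦ neg_mul_sub_le_sub_abelRHS (hv_super s (hsub (Ioo_subset_Icc_self hs))))

theorem stmt_0_general (t₀ : ℝ) (τ₀ : EReal)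
    (a b c d η y : ℝ → ℝ)
    (ha : ContinuousOn a (eIco t₀ τ₀)) (hb : ContinuousOn b (eIco t₀ τ₀))
    (hc : ContinuousOn c (eIco t₀ τ₀))
    (hη : ∀ t ∈ eIco t₀ τ₀, ∃ v : ℝ, HasDerivWithinAt η v (eIco t₀ τ₀) t ∧
      0 ≤ v + a t * η t ^ 3 + b t * η t ^ 2 + c t * η t + d t)
    (hy : IsAbelSolOn a b c d y (eIco t₀ τ₀))
    (h0 : y t₀ ≤ η t₀) :
    (∀ t ∈ eIco t₀ τ₀, y t ≤ η t) ∧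
      (y t₀ < η t₀ → ∀ t ∈ eIco t₀ τ₀, y t < η t) := by
  refine ⟨fun t ht ↦ ?_, fun hlt t ht ↦ ?_⟩ <;>
  · obtain ⟨k, hk, hkt⟩ := exists_pos_mul_sub_le_of_abel ha hb hc hη hy ht
    nlinarith

/-- Lemma 2.2: comparison of a solution of the Abel equation with a supersolution
of the differential inequality (2.4) on `[t₀, τ₀)`. -/
theorem stmt_0 (t₀ : ℝ) (τ₀ : EReal) (hτ : (t₀ : EReal) < τ₀)
    (a b c d η y : ℝ → ℝ)
    (ha : ContinuousOn a (eIco t₀ τ₀)) (hb : ContinuousOn b (eIco t₀ τ₀))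
    (hc : ContinuousOn c (eIco t₀ τ₀)) (hd : ContinuousOn d (eIco t₀ τ₀))
    (hη : ∀ t ∈ eIco t₀ τ₀, ∃ v : ℝ, HasDerivWithinAt η v (eIco t₀ τ₀) t ∧
      0 ≤ v + a t * η t ^ 3 + b t * η t ^ 2 + c t * η t + d t)
    (hy : IsAbelSolOn a b c d y (eIco t₀ τ₀))
    (h0 : y t₀ ≤ η t₀) :
    (∀ t ∈ eIco t₀ τ₀, y t ≤ η t) ∧
      (y t₀ < η t₀ → ∀ t ∈ eIco t₀ τ₀, y t < η t) :=
  stmt_0_general t₀ τ₀ a b c d η y ha hb hc hη hy h0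
end

section
/- Let η : [t₀, τ₀) → ℝ be differentiable and satisfy the differential inequality η′(t) + a(t)η(t)³ + b(t)η(t)² + c(t)η(t) + d(t) ≤ 0 for all t ∈ [t₀, τ₀), and let y be a solution of the Abel equation (1.1) on [t₀, τ₀) with y(t₀) ≥ η(t₀). Then y(t) ≥ η(t) for all t ∈ [t₀, τ₀). Furthermore, if y(t₀) > η(t₀), then y(t) > η(t) for all t ∈ [t₀, τ₀). -/
open Set MeasureTheory intervalIntegral

/-!
The difference `w = y - η` satisfies `w' + g w ≥ 0`, where
`g = a (y² + y η + η²) + b (y + η) + c` comes from factoring `y - η` out of the difference of the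
cubic nonlinearities at `y` and at `η`. Since `g` is continuous, the integrating factor
`exp (∫_{t₀}^t g)` makes `w · exp (∫_{t₀}^t g)` nondecreasing, so the sign of `w (t₀)` propagates
to every later time.
-/

theorem abel_cubic_sub_factor (a b c d y η : ℝ) :
    (a * y ^ 3 + b * y ^ 2 + c * y + d) - (a * η ^ 3 + b * η ^ 2 + c * η + d) =
      (y - η) * (a * (y ^ 2 + y * η + η ^ 2) + b * (y + η) + c) := by
  ring

section IntegratingFactor

variable {w g : ℝ → ℝ} {t₀ T : ℝ}

theorem monotoneOn_mul_exp_integral (hT : t₀ ≤ T) (hw : ContinuousOn w (Icc t₀ T))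
    (hg : ContinuousOn g (Icc t₀ T))
    (hw' : ∀ x ∈ Ioo t₀ T, ∃ w', HasDerivAt w w' x ∧ 0 ≤ w' + g x * w x) :
    MonotoneOn (fun x ↦ w x * Real.exp (∫ s in t₀..x, g s)) (Icc t₀ T) := by
  have hG : ContinuousOn (fun x ↦ ∫ s in t₀..x, g s) (Icc t₀ T) := by
    simpa only [uIcc_of_le hT] using
      continuousOn_primitive_interval (μ := volume) (f := g) (a := t₀) (b := T)
        (by simpa only [uIcc_of_le hT] using hg.integrableOn_Icc)
  have hderiv : ∀ x ∈ Ioo t₀ T,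
      ∃ u', HasDerivAt (fun x ↦ w x * Real.exp (∫ s in t₀..x, g s)) u' x ∧ 0 ≤ u' := by
    intro x hx
    obtain ⟨w', hw'x, hineq⟩ := hw' x hx
    have hGx : HasDerivAt (fun x ↦ ∫ s in t₀..x, g s) (g x) x := by
      refine integral_hasDerivAt_right ?_ ?_ ?_
      · exact (hg.mono (Icc_subset_Icc_right hx.2.le)).intervalIntegrable_of_Icc hx.1.le
      · exact (hg.mono Ioo_subset_Icc_self).stronglyMeasurableAtFilter isOpen_Ioo x hx
      · exact hg.continuousAt (Icc_mem_nhds hx.1 hx.2)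
    refine ⟨_, hw'x.mul hGx.exp, ?_⟩
    have := Real.exp_pos (∫ s in t₀..x, g s)
    nlinarith
  refine monotoneOn_of_deriv_nonneg (convex_Icc t₀ T) (hw.mul hG.rexp) ?_ ?_ <;>
    rw [interior_Icc]
  · exact fun x hx ↦ (hderiv x hx).choose_spec.1.differentiableAt.differentiableWithinAt
  · intro x hx
    obtain ⟨u', hu', hu'_nonneg⟩ := hderiv x hx
    rwa [hu'.deriv]

theorem le_mul_exp_integral_of_deriv_add_mul_nonneg (hT : t₀ ≤ T)
    (hw : ContinuousOn w (Icc t₀ T)) (hg : ContinuousOn g (Icc t₀ T))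
    (hw' : ∀ x ∈ Ioo t₀ T, ∃ w', HasDerivAt w w' x ∧ 0 ≤ w' + g x * w x) :
    w t₀ ≤ w T * Real.exp (∫ s in t₀..T, g s) := by
  simpa using monotoneOn_mul_exp_integral hT hw hg hw' (left_mem_Icc.2 hT) (right_mem_Icc.2 hT) hT

end IntegratingFactor

theorem Icc_subset_eIco_s1 {t₀ T : ℝ} {τ : EReal} (hT : T ∈ eIco t₀ τ) :
    Icc t₀ T ⊆ eIco t₀ τ :=
  fun _ hx ↦ ⟨hx.1, (EReal.coe_le_coe_iff.2 hx.2).trans_lt hT.2⟩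

theorem stmt_1_general (t₀ : ℝ) (τ₀ : EReal)
    (a b c d η y : ℝ → ℝ)
    (ha : ContinuousOn a (eIco t₀ τ₀)) (hb : ContinuousOn b (eIco t₀ τ₀))
    (hc : ContinuousOn c (eIco t₀ τ₀))
    (hη : ∀ t ∈ eIco t₀ τ₀, ∃ v : ℝ, HasDerivWithinAt η v (eIco t₀ τ₀) t ∧
      v + a t * η t ^ 3 + b t * η t ^ 2 + c t * η t + d t ≤ 0)
    (hy : IsAbelSolOn a b c d y (eIco t₀ τ₀))
    (h0 : η t₀ ≤ y t₀) :
    (∀ t ∈ eIco t₀ τ₀, η t ≤ y t) ∧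
      (η t₀ < y t₀ → ∀ t ∈ eIco t₀ τ₀, η t < y t) := by
  set S := eIco t₀ τ₀
  have hyc : ContinuousOn y S := fun t ht ↦ (hy t ht).continuousWithinAt
  have hηc : ContinuousOn η S := fun t ht ↦ (hη t ht).choose_spec.1.continuousWithinAt
  set g : ℝ → ℝ := fun t ↦
    a t * (y t ^ 2 + y t * η t + η t ^ 2) + b t * (y t + η t) + c t
  have hgc : ContinuousOn g S := by fun_prop
  have key : ∀ T ∈ S, y t₀ - η t₀ ≤ (y T - η T) * Real.exp (∫ s in t₀..T, g s) := by
    intro T hT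
    have hsub := Icc_subset_eIco_s1 hT
    refine le_mul_exp_integral_of_deriv_add_mul_nonneg hT.1 ((hyc.sub hηc).mono hsub)
      (hgc.mono hsub) fun x hx ↦ ?_
    have hxS : x ∈ S := hsub (Ioo_subset_Icc_self hx)
    have hS : S ∈ nhds x :=
      Filter.mem_of_superset (Ioo_mem_nhds hx.1 hx.2) (Ioo_subset_Icc_self.trans hsub)
    obtain ⟨v, hηx, hineq⟩ := hη x hxS
    refine ⟨_, ((hy x hxS).hasDerivAt hS).sub (hηx.hasDerivAt hS), ?_⟩
    have := abel_cubic_sub_factor (a x) (b x) (c x) (d x) (y x) (η x)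
    simp only [abelRHS, g, Pi.sub_apply]
    linarith
  refine ⟨fun t ht ↦ ?_, fun _ t ht ↦ ?_⟩ <;>
    nlinarith [key t ht, Real.exp_pos (∫ s in t₀..t, g s)]

/-- Lemma 2.3: comparison of a solution of the Abel equation with a subsolution
of the differential inequality (2.8) on `[t₀, τ₀)`. -/
theorem stmt_1 (t₀ : ℝ) (τ₀ : EReal) (hτ : (t₀ : EReal) < τ₀)
    (a b c d η y : ℝ → ℝ)
    (ha : ContinuousOn a (eIco t₀ τ₀)) (hb : ContinuousOn b (eIco t₀ τ₀))
    (hc : ContinuousOn c (eIco t₀ τ₀)) (hd : ContinuousOn d (eIco t₀ τ₀))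
    (hη : ∀ t ∈ eIco t₀ τ₀, ∃ v : ℝ, HasDerivWithinAt η v (eIco t₀ τ₀) t ∧
      v + a t * η t ^ 3 + b t * η t ^ 2 + c t * η t + d t ≤ 0)
    (hy : IsAbelSolOn a b c d y (eIco t₀ τ₀))
    (h0 : η t₀ ≤ y t₀) :
    (∀ t ∈ eIco t₀ τ₀, η t ≤ y t) ∧
      (η t₀ < y t₀ → ∀ t ∈ eIco t₀ τ₀, η t < y t) :=
  stmt_1_general t₀ τ₀ a b c d η y ha hb hc hη hy h0
end

section
/- Suppose τ₀ < +∞, the functions a, b, c, d are continuous on the closed interval [t₀, τ₀], a(t) > 0 for Lebesgue-almost every t ∈ [t₀, τ₀], and the function t ↦ b(t)²/a(t) is Lebesgue integrable on [t₀, τ₀]. Then every solution y of the Abel equation (1.1) on [t₀, τ₀) is bounded on [t₀, τ₀) and extends to a solution of (1.1) on the closed interval [t₀, τ₀]. -/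
/-!
Along a solution, `(log (1 + y²))' = 2 y y' / (1 + y²)`, and completing the square in
`2 a y⁴ + 2 b y³` bounds this by `b²/a + 2|c| + |d|` wherever `a > 0`. That bound is integrable
on `[t₀, τ₀]`, so `log (1 + y²)`, and with it `y`, stays bounded on `[t₀, τ₀)`. Continuous
coefficients then make `y'` bounded, hence integrable, so `y` has a limit at `τ₀`; the extended
function solves (1.1) at `τ₀` because its derivative has the right limit there.
-/

open Set MeasureTheory intervalIntegral

open Filter Topology

lemma IsAbelSolOn.continuousOn {a b c d y : ℝ → ℝ} {S : Set ℝ} (hy : IsAbelSolOn a b c d y S) :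
    ContinuousOn y S :=
  fun t ht => (hy t ht).continuousWithinAt

lemma IsAbelSolOn.congr {a b c d y z : ℝ → ℝ} {S : Set ℝ} (hy : IsAbelSolOn a b c d y S)
    (hzy : EqOn z y S) : IsAbelSolOn a b c d z S := by
  intro t ht
  have hrhs : abelRHS a b c d z t = abelRHS a b c d y t := by simp only [abelRHS, hzy ht]
  exact hrhs ▸ (hy t ht).congr hzy (hzy ht)

lemma ContinuousOn.abelRHS {a b c d y : ℝ → ℝ} {S : Set ℝ} (ha : ContinuousOn a S)
    (hb : ContinuousOn b S) (hc : ContinuousOn c S) (hd : ContinuousOn d S)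
    (hy : ContinuousOn y S) : ContinuousOn (abelRHS a b c d y) S :=
  ((((ha.mul (hy.pow 3)).add (hb.mul (hy.pow 2))).add (hc.mul hy)).add hd).neg

lemma two_mul_mul_abel_div_le {a b c d y : ℝ} (ha : 0 < a) :
    2 * y * -(a * y ^ 3 + b * y ^ 2 + c * y + d) / (1 + y ^ 2) ≤
      b ^ 2 / a + (2 * |c| + |d|) := by
  have hquartic : -(2 * a * y ^ 4 + 2 * b * y ^ 3) ≤ b ^ 2 / a * (1 + y ^ 2) := by
    have hsq : 0 ≤ 2 * a * (y ^ 2 + b * y / (2 * a)) ^ 2 := by positivity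
    have hexp : 2 * a * (y ^ 2 + b * y / (2 * a)) ^ 2 =
        2 * a * y ^ 4 + 2 * b * y ^ 3 + b ^ 2 / a * (y ^ 2 / 2) := by
      field_simp; ring
    have hhalf : b ^ 2 / a * (y ^ 2 / 2) ≤ b ^ 2 / a * (1 + y ^ 2) := by
      gcongr; nlinarith [sq_nonneg y]
    linarith
  have hquad : -(2 * c * y ^ 2) ≤ 2 * |c| * (1 + y ^ 2) := by
    nlinarith [neg_abs_le c, sq_nonneg y, abs_nonneg c]
  have hlin : -(2 * d * y) ≤ |d| * (1 + y ^ 2) := by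
    have h1 : -(d * y) ≤ |d| * |y| := (neg_le_abs _).trans (abs_mul d y).le
    have h2 : 2 * |y| ≤ 1 + y ^ 2 := by nlinarith [sq_nonneg (|y| - 1), sq_abs y]
    nlinarith [abs_nonneg d]
  rw [div_le_iff₀ (by positivity)]
  linarith

lemma sub_le_integral_of_hasDerivAt_of_ae_le {H H' g : ℝ → ℝ} {a b : ℝ} (hab : a ≤ b)
    (hH : ContinuousOn H (Icc a b)) (hderiv : ∀ x ∈ Ioo a b, HasDerivAt H (H' x) x)
    (hH' : IntervalIntegrable H' volume a b) (hg : IntervalIntegrable g volume a b)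
    (hle : H' ≤ᵐ[volume.restrict (Icc a b)] g) : H b - H a ≤ ∫ x in a..b, g x :=
  (integral_eq_sub_of_hasDerivAt_of_le hab hH hderiv hH').symm.le.trans
    (integral_mono_ae_restrict hab hH' hg hle)

section Bounded

variable {t₀ τ₀ : ℝ} {a b c d y : ℝ → ℝ}

lemma IsAbelSolOn.log_one_add_sq_sub_le (ha : ContinuousOn a (Icc t₀ τ₀))
    (hb : ContinuousOn b (Icc t₀ τ₀)) (hc : ContinuousOn c (Icc t₀ τ₀))
    (hd : ContinuousOn d (Icc t₀ τ₀)) (hapos : ∀ᵐ t ∂(volume.restrict (Icc t₀ τ₀)), 0 < a t)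
    (hint : IntegrableOn (fun s => b s ^ 2 / a s) (Icc t₀ τ₀))
    (hy : IsAbelSolOn a b c d y (Ico t₀ τ₀)) {t : ℝ} (ht : t ∈ Ico t₀ τ₀) :
    Real.log (1 + y t ^ 2) - Real.log (1 + y t₀ ^ 2) ≤
      ∫ s in Icc t₀ τ₀, b s ^ 2 / a s + (2 * |c s| + |d s|) := by
  set g : ℝ → ℝ := fun s => b s ^ 2 / a s + (2 * |c s| + |d s|)
  have hIcc : Icc t₀ t ⊆ Ico t₀ τ₀ := Icc_subset_Ico_right ht.2
  have hsub : Icc t₀ t ⊆ Icc t₀ τ₀ := hIcc.trans Ico_subset_Icc_self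
  have hg : IntegrableOn g (Icc t₀ τ₀) :=
    hint.add ((hc.abs.integrableOn_Icc.const_mul 2).add hd.abs.integrableOn_Icc)
  have hg_nonneg : 0 ≤ᵐ[volume.restrict (Icc t₀ τ₀)] g := by
    filter_upwards [hapos] with s hs
    have hb2 : 0 ≤ b s ^ 2 / a s := by positivity
    simp only [g, Pi.zero_apply]
    positivity
  have hyc : ContinuousOn y (Icc t₀ t) := hy.continuousOn.mono hIcc
  have hpos : ∀ s, 1 + y s ^ 2 ≠ 0 := fun s => by positivity
  have hderiv : ∀ x ∈ Ioo t₀ t, HasDerivAt (fun s => Real.log (1 + y s ^ 2))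
      (2 * y x * abelRHS a b c d y x / (1 + y x ^ 2)) x := by
    intro x hx
    have hyx : HasDerivAt y (abelRHS a b c d y x) x :=
      (hy x (hIcc (Ioo_subset_Icc_self hx))).hasDerivAt (Ico_mem_nhds hx.1 (hx.2.trans ht.2))
    convert ((hyx.fun_pow 2).const_add 1).log (hpos x) using 1
    push_cast
    ring
  have hf : ContinuousOn (abelRHS a b c d y) (Icc t₀ t) :=
    (ha.mono hsub).abelRHS (hb.mono hsub) (hc.mono hsub) (hd.mono hsub) hyc
  have hH' : IntervalIntegrable (fun x => 2 * y x * abelRHS a b c d y x / (1 + y x ^ 2))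
      volume t₀ t := by
    refine ContinuousOn.intervalIntegrable_of_Icc ht.1 ?_
    exact ((continuousOn_const.mul hyc).mul hf).div (continuousOn_const.add (hyc.pow 2))
      fun s _ => hpos s
  have hle : ∀ᵐ x ∂(volume.restrict (Icc t₀ t)),
      2 * y x * abelRHS a b c d y x / (1 + y x ^ 2) ≤ g x := by
    filter_upwards [ae_restrict_of_ae_restrict_of_subset hsub hapos] with x hx
    exact two_mul_mul_abel_div_le hx
  calc Real.log (1 + y t ^ 2) - Real.log (1 + y t₀ ^ 2) ≤ ∫ s in t₀..t, g s :=
        sub_le_integral_of_hasDerivAt_of_ae_le ht.1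
          ((continuousOn_const.add (hyc.fun_pow 2)).log fun s _ => hpos s) hderiv hH'
          ((intervalIntegrable_iff_integrableOn_Icc_of_le ht.1).2 (hg.mono_set hsub)) hle
    _ ≤ ∫ s in Icc t₀ τ₀, g s := by
        rw [intervalIntegral.integral_of_le ht.1]
        exact setIntegral_mono_set hg hg_nonneg (Ioc_subset_Icc_self.trans hsub).eventuallyLE

lemma IsAbelSolOn.exists_abs_le (ha : ContinuousOn a (Icc t₀ τ₀))
    (hb : ContinuousOn b (Icc t₀ τ₀)) (hc : ContinuousOn c (Icc t₀ τ₀))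
    (hd : ContinuousOn d (Icc t₀ τ₀)) (hapos : ∀ᵐ t ∂(volume.restrict (Icc t₀ τ₀)), 0 < a t)
    (hint : IntegrableOn (fun s => b s ^ 2 / a s) (Icc t₀ τ₀))
    (hy : IsAbelSolOn a b c d y (Ico t₀ τ₀)) : ∃ M, ∀ t ∈ Ico t₀ τ₀, |y t| ≤ M := by
  set C := ∫ s in Icc t₀ τ₀, b s ^ 2 / a s + (2 * |c s| + |d s|)
  refine ⟨√((1 + y t₀ ^ 2) * Real.exp C), fun t ht => Real.abs_le_sqrt ?_⟩
  have hlog := hy.log_one_add_sq_sub_le ha hb hc hd hapos hint ht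
  have hexp : 1 + y t ^ 2 ≤ (1 + y t₀ ^ 2) * Real.exp C := by
    rw [← Real.log_le_log_iff (by positivity) (by positivity), Real.log_mul (by positivity)
      (Real.exp_ne_zero _), Real.log_exp]
    linarith
  linarith

end Bounded

lemma exists_norm_abelRHS_le {a b c d y : ℝ → ℝ} {S T : Set ℝ} (hS : IsCompact S)
    (ha : ContinuousOn a S) (hb : ContinuousOn b S) (hc : ContinuousOn c S)
    (hd : ContinuousOn d S) (hTS : T ⊆ S) {M : ℝ} (hM : ∀ t ∈ T, |y t| ≤ M) :
    ∃ K, ∀ t ∈ T, ‖abelRHS a b c d y t‖ ≤ K := by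
  have hfst : MapsTo Prod.fst (S ×ˢ Icc (-M) M) S := fun p hp => hp.1
  have hφ : ContinuousOn
      (fun p : ℝ × ℝ => -(a p.1 * p.2 ^ 3 + b p.1 * p.2 ^ 2 + c p.1 * p.2 + d p.1))
      (S ×ˢ Icc (-M) M) := by
    fun_prop (disch := exact hfst)
  obtain ⟨K, hK⟩ := (hS.prod isCompact_Icc).exists_bound_of_continuousOn hφ
  exact ⟨K, fun t ht => hK (t, y t) ⟨hTS ht, abs_le.1 (hM t ht)⟩⟩

lemma exists_continuous_eqOn_Ico_of_integrableOn_deriv {y y' : ℝ → ℝ} {t₀ τ₀ : ℝ}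
    (hy : ∀ t ∈ Ico t₀ τ₀, HasDerivWithinAt y (y' t) (Ico t₀ τ₀) t)
    (hy' : IntegrableOn y' (Ico t₀ τ₀)) : ∃ z, Continuous z ∧ EqOn z y (Ico t₀ τ₀) := by
  have hint : Integrable ((Ico t₀ τ₀).indicator y') := hy'.integrable_indicator measurableSet_Ico
  refine ⟨fun t => y t₀ + ∫ s in t₀..t, (Ico t₀ τ₀).indicator y' s,
    continuous_const.add (continuous_primitive (fun _ _ => hint.intervalIntegrable) t₀), ?_⟩
  intro t ht
  have hIcc : Icc t₀ t ⊆ Ico t₀ τ₀ := Icc_subset_Ico_right ht.2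
  have hindicator : ∫ s in t₀..t, (Ico t₀ τ₀).indicator y' s = ∫ s in t₀..t, y' s :=
    integral_congr fun s hs => indicator_of_mem (hIcc (uIcc_of_le ht.1 ▸ hs)) y'
  have hftc : ∫ s in t₀..t, y' s = y t - y t₀ :=
    integral_eq_sub_of_hasDerivAt_of_le ht.1
      (fun s hs => (hy s (hIcc hs)).continuousWithinAt.mono hIcc)
      (fun s hs => (hy s (hIcc (Ioo_subset_Icc_self hs))).hasDerivAt
        (Ico_mem_nhds hs.1 (hs.2.trans ht.2)))
      ((intervalIntegrable_iff_integrableOn_Icc_of_le ht.1).2 (hy'.mono_set hIcc))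
  simp only [hindicator, hftc]
  ring

lemma hasDerivWithinAt_Icc_of_hasDerivWithinAt_Ico {z F : ℝ → ℝ} {t₀ τ₀ : ℝ} (hτ : t₀ < τ₀)
    (hz : ContinuousOn z (Icc t₀ τ₀)) (hF : ContinuousOn F (Icc t₀ τ₀))
    (hderiv : ∀ t ∈ Ico t₀ τ₀, HasDerivWithinAt z (F t) (Ico t₀ τ₀) t) {t : ℝ}
    (ht : t ∈ Icc t₀ τ₀) : HasDerivWithinAt z (F t) (Icc t₀ τ₀) t := by
  rcases ht.2.lt_or_eq with hlt | rfl
  · have hmem : Ico t₀ τ₀ ∈ 𝓝[Icc t₀ τ₀] t :=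
      mem_nhdsWithin.2 ⟨Iio τ₀, isOpen_Iio, hlt, fun s hs => ⟨hs.2.1, hs.1⟩⟩
    exact (hderiv t ⟨ht.1, hlt⟩).mono_of_mem_nhdsWithin hmem
  · have hIoo : Ioo t₀ t ∈ 𝓝[<] t := Ioo_mem_nhdsLT hτ
    have hderiv' : ∀ x ∈ Ioo t₀ t, HasDerivAt z (F x) x := fun x hx =>
      (hderiv x (Ioo_subset_Ico_self hx)).hasDerivAt (Ico_mem_nhds hx.1 hx.2)
    have hlim : Tendsto (deriv z) (𝓝[<] t) (𝓝 (F t)) := by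
      have hF' : Tendsto F (𝓝[<] t) (𝓝 (F t)) := by
        rw [← nhdsWithin_Ico_eq_nhdsLT hτ]
        exact (hF t (right_mem_Icc.2 hτ.le)).tendsto.mono_left
          (nhdsWithin_mono _ Ico_subset_Icc_self)
      exact hF'.congr' (eventually_of_mem hIoo fun x hx => (hderiv' x hx).deriv.symm)
    exact (hasDerivWithinAt_Iic_of_tendsto_deriv
      (fun x hx => (hderiv' x hx).differentiableAt.differentiableWithinAt)
      ((hz t (right_mem_Icc.2 hτ.le)).mono Ioo_subset_Icc_self) hIoo hlim).mono Icc_subset_Iic_self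

/-- Remark 2.1: for `τ₀ < ∞`, with `a > 0` a.e. on `[t₀, τ₀]` and `b²/a` integrable on
`[t₀, τ₀]`, every solution of (1.1) on `[t₀, τ₀)` is bounded and extends to a solution
on the closed interval `[t₀, τ₀]`. -/
theorem stmt_3 (t₀ τ₀ : ℝ) (hτ : t₀ < τ₀)
    (a b c d : ℝ → ℝ)
    (ha : ContinuousOn a (Icc t₀ τ₀)) (hb : ContinuousOn b (Icc t₀ τ₀))
    (hc : ContinuousOn c (Icc t₀ τ₀)) (hd : ContinuousOn d (Icc t₀ τ₀))
    (hapos : ∀ᵐ t ∂(volume.restrict (Icc t₀ τ₀)), 0 < a t)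
    (hint : IntegrableOn (fun s => b s ^ 2 / a s) (Icc t₀ τ₀))
    (y : ℝ → ℝ) (hy : IsAbelSolOn a b c d y (Ico t₀ τ₀)) :
    (∃ M : ℝ, ∀ t ∈ Ico t₀ τ₀, |y t| ≤ M) ∧
      ∃ z : ℝ → ℝ, IsAbelSolOn a b c d z (Icc t₀ τ₀) ∧ EqOn z y (Ico t₀ τ₀) := by
  have hIco : Ico t₀ τ₀ ⊆ Icc t₀ τ₀ := Ico_subset_Icc_self
  obtain ⟨M, hM⟩ := hy.exists_abs_le ha hb hc hd hapos hint
  obtain ⟨K, hK⟩ := exists_norm_abelRHS_le isCompact_Icc ha hb hc hd hIco hM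
  have hf : IntegrableOn (abelRHS a b c d y) (Ico t₀ τ₀) :=
    IntegrableOn.of_bound measure_Ico_lt_top
      (((ha.mono hIco).abelRHS (hb.mono hIco) (hc.mono hIco) (hd.mono hIco)
        hy.continuousOn).aestronglyMeasurable measurableSet_Ico)
      K (ae_restrict_of_forall_mem measurableSet_Ico hK)
  obtain ⟨z, hz, hzy⟩ := exists_continuous_eqOn_Ico_of_integrableOn_deriv hy hf
  refine ⟨⟨M, hM⟩, z, fun t ht => ?_, hzy⟩
  exact hasDerivWithinAt_Icc_of_hasDerivWithinAt_Ico hτ hz.continuousOn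
    (ha.abelRHS hb hc hd hz.continuousOn) (hy.congr hzy) ht
end

section
/- Assume: (1) a(t) > 0 for almost every t ∈ [t₀, T]; (2) the function t ↦ b(t)²/a(t) is Lebesgue integrable on [t₀, T]; (3) ∫_{t₀}^{T} [c(t) − b(t)²/(4a(t))] dt > 0; (4) d(t) ≥ 0 for all t ∈ [t₀, T]. Then the Abel equation (1.1) has a closed solution y on [t₀, T] with y(t) ≤ 0 for all t ∈ [t₀, T]. -/
open Set MeasureTheory intervalIntegral

open Filter Topology Real
open scoped NNReal

/-!
Write `r = -y` and `χ = b²/(4a) - c`. Where `y ≤ 0` and `a > 0`, completing the square gives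
`r' ≤ χ r + d`, and Grönwall's inequality with the integrating factor `exp (-∫ χ)` (only absolutely
continuous, as `χ` is only integrable) bounds `r T` by `exp (∫ χ) (r t₀ + ∫ d exp (-∫ χ))`.
Since `∫ χ < 0`, this factor is `< 1`, so for a suitable `σ < 0` the time-`T` map `s ↦ y(T; s)`
sends `[σ, 0]` into itself; solutions stay `≤ 0` because `y' = -d ≤ 0` where `y = 0`. To have
solutions on the whole of `[t₀, T]`, the equation is first truncated outside the a priori box
`[-K, 0]`. The time-`T` map is continuous, so it has a fixed point: a closed solution.
-/

theorem LipschitzOnWith.comp_absolutelyContinuousOnInterval {X Y : Type*} [PseudoMetricSpace X]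
    [PseudoMetricSpace Y] {g : X → Y} {K : ℝ≥0} {s : Set X} {f : ℝ → X} {a b : ℝ}
    (hg : LipschitzOnWith K g s) (hf : AbsolutelyContinuousOnInterval f a b)
    (hfs : MapsTo f (uIcc a b) s) : AbsolutelyContinuousOnInterval (g ∘ f) a b := by
  refine squeeze_zero' (Eventually.of_forall fun E => Finset.sum_nonneg fun i _ => dist_nonneg) ?_
    (by simpa using Tendsto.const_mul (K : ℝ) hf)
  filter_upwards [mem_inf_of_right (mem_principal_self _)] with E hE
  rw [Finset.mul_sum]
  gcongr with i hi
  exact hg.dist_le_mul _ (hfs (hE.1 i hi).1) _ (hfs (hE.1 i hi).2)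

theorem AbsolutelyContinuousOnInterval.contDiff_comp {E : Type*} [NormedAddCommGroup E]
    [NormedSpace ℝ E] {g : ℝ → E} {f : ℝ → ℝ} {a b : ℝ} (hg : ContDiff ℝ 1 g)
    (hf : AbsolutelyContinuousOnInterval f a b) :
    AbsolutelyContinuousOnInterval (fun x => g (f x)) a b := by
  obtain ⟨C, hC⟩ := hf.exists_bound
  obtain ⟨K, hK⟩ := hg.contDiffOn.exists_lipschitzOnWith (by norm_num) (convex_Icc (-C) C)
    isCompact_Icc
  exact hK.comp_absolutelyContinuousOnInterval hf fun x hx => abs_le.1 (hC x hx)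

/-- Grönwall's inequality for `r' ≤ χ r + d`. As `χ` is merely integrable, `r exp (-∫ χ)` is only
absolutely continuous, and the fundamental theorem of calculus is used in that form. -/
theorem AbsolutelyContinuousOnInterval.mul_exp_neg_integral_le {r χ d : ℝ → ℝ} {α β : ℝ}
    (hαβ : α ≤ β) (hr : AbsolutelyContinuousOnInterval r α β)
    (hχ : IntervalIntegrable χ volume α β) (hd : IntervalIntegrable d volume α β)
    (hle : ∀ᵐ t ∂volume.restrict (Icc α β), deriv r t ≤ χ t * r t + d t) :
    r β * exp (-∫ s in α..β, χ s) ≤ r α + ∫ t in α..β, d t * exp (-∫ s in α..t, χ s) := by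
  set Ψ : ℝ → ℝ := fun u => ∫ s in α..u, χ s
  have hΨ : AbsolutelyContinuousOnInterval Ψ α β :=
    hχ.absolutelyContinuousOnInterval_intervalIntegral (by simp)
  have hE : AbsolutelyContinuousOnInterval (fun t => exp (-Ψ t)) α β :=
    hΨ.fun_neg.contDiff_comp contDiff_exp
  have hdE : IntervalIntegrable (fun t => d t * exp (-Ψ t)) volume α β :=
    hd.mul_continuousOn hE.continuousOn
  set φ : ℝ → ℝ := fun t => (∫ s in α..t, d s * exp (-Ψ s)) - r t * exp (-Ψ t)
  have hφ : AbsolutelyContinuousOnInterval φ α β :=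
    (hdE.absolutelyContinuousOnInterval_intervalIntegral (by simp)).fun_sub (hr.fun_mul hE)
  have hφ' : ∀ᵐ t ∂volume.restrict (Icc α β), 0 ≤ deriv φ t := by
    rw [ae_restrict_iff' measurableSet_Icc] at hle ⊢
    filter_upwards [hle, hr.ae_differentiableAt, hχ.ae_hasDerivAt_integral,
      hdE.ae_hasDerivAt_integral] with t hle hr' hΨ' hJ' ht
    rw [uIcc_of_le hαβ] at hr' hΨ' hJ'
    have hα : α ∈ Icc α β := left_mem_Icc.2 hαβ
    have hderiv : HasDerivAt φ (exp (-Ψ t) * (χ t * r t + d t - deriv r t)) t := by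
      refine ((hJ' ht α hα).fun_sub
        ((hr' ht).hasDerivAt.fun_mul (hΨ' ht α hα).fun_neg.exp)).congr_deriv ?_
      ring
    rw [hderiv.deriv]
    exact mul_nonneg (exp_pos _).le (sub_nonneg.2 (hle ht))
  have hint := integral_nonneg_of_ae_restrict hαβ hφ'
  rw [hφ.integral_deriv_eq_sub] at hint
  simp only [φ, Ψ, integral_same, neg_zero, exp_zero, mul_one] at hint
  linarith

theorem ContinuousOn.forall_lt_of_forall_Ico_lt {f : ℝ → ℝ} {a b c : ℝ}
    (hf : ContinuousOn f (Icc a b)) (h : ∀ τ ∈ Icc a b, (∀ t ∈ Ico a τ, c < f t) → c < f τ) :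
    ∀ t ∈ Icc a b, c < f t := by
  by_contra! ⟨t, ht, hft⟩
  set B := Icc a b ∩ f ⁻¹' Iic c
  have hBb : BddBelow B := bddBelow_Icc.mono inter_subset_left
  have hB : sInf B ∈ B :=
    (hf.preimage_isClosed_of_isClosed isClosed_Icc isClosed_Iic).csInf_mem ⟨t, ht, hft⟩ hBb
  refine (h _ hB.1 fun u hu => ?_).not_ge hB.2
  by_contra! hfu
  exact hu.2.not_ge (csInf_le hBb ⟨⟨hu.1, hu.2.le.trans hB.1.2⟩, hfu⟩)

theorem image_nonpos_of_deriv_right_nonpos {f f' : ℝ → ℝ} {a b : ℝ}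
    (hf : ContinuousOn f (Icc a b)) (hf' : ∀ x ∈ Ico a b, HasDerivWithinAt f (f' x) (Ici x) x)
    (ha : f a ≤ 0) (bound : ∀ x ∈ Ico a b, 0 ≤ f x → f' x ≤ 0) : ∀ x ∈ Icc a b, f x ≤ 0 := by
  intro x hx
  have hf_le : ∀ ε > 0, f x ≤ ε * (x - a) := fun ε hε =>
    image_le_of_deriv_right_lt_deriv_boundary hf hf' (by simpa using ha)
      (fun y => (((hasDerivAt_id' y).sub_const a).const_mul ε).congr_deriv (mul_one ε))
      (fun y hy hfy => (bound y hy (hfy ▸ mul_nonneg hε.le (sub_nonneg.2 hy.1))).trans_lt hε) hx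
  have hlim : Tendsto (fun ε => ε * (x - a)) (𝓝[>] 0) (𝓝 0) :=
    ((continuous_mul_const (x - a)).tendsto' 0 0 (zero_mul _)).mono_left nhdsWithin_le_nhds
  exact ge_of_tendsto hlim (eventually_nhdsWithin_of_forall hf_le)

theorem exists_nonpos_mul_le_neg {J E : ℝ} (hJ : 0 ≤ J) (hE : E < 1) :
    ∃ σ ≤ 0, (J - σ) * E ≤ -σ := by
  have hE' : 0 < 1 - E := by linarith
  refine ⟨-(J / (1 - E)), neg_nonpos.2 (div_nonneg hJ hE'.le), ?_⟩
  rw [sub_neg_eq_add, neg_neg, ← sub_nonneg]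
  have : J / (1 - E) - (J + J / (1 - E)) * E = J * (1 - E) := by
    field_simp
    ring
  rw [this]
  exact mul_nonneg hJ hE'.le

theorem exists_flow_of_lipschitzWith_of_norm_le {E : Type*} [NormedAddCommGroup E]
    [NormedSpace ℝ E] [CompleteSpace E] {v : ℝ → E → E} {t₀ T : ℝ} (hT : t₀ ≤ T) {K L : ℝ≥0}
    (hlip : ∀ t ∈ Icc t₀ T, LipschitzWith K (v t))
    (hcont : ∀ x, ContinuousOn (v · x) (Icc t₀ T)) (hbound : ∀ t ∈ Icc t₀ T, ∀ x, ‖v t x‖ ≤ L)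
    (x₀ : E) (R : ℝ≥0) :
    ∃ α : E → ℝ → E, (∀ x ∈ Metric.closedBall x₀ R, α x t₀ = x ∧
      (∀ t ∈ Icc t₀ T, HasDerivWithinAt (α x) (v t (α x t)) (Icc t₀ T) t) ∧
      LipschitzOnWith L (α x) (Icc t₀ T)) ∧
      ∀ t ∈ Icc t₀ T, ContinuousOn (α · t) (Metric.closedBall x₀ R) := by
  have hPL : IsPicardLindelof v (tmin := t₀) (tmax := T) ⟨t₀, left_mem_Icc.2 hT⟩ x₀
      (R + L * (T - t₀).toNNReal) R L K :=
    { lipschitzOnWith := fun t ht => (hlip t ht).lipschitzOnWith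
      continuousOn := fun x _ => hcont x
      norm_le := fun t ht x _ => hbound t ht x
      mul_max_le := by simp [hT] }
  obtain ⟨α, hα, L', hL'⟩ := hPL.exists_forall_mem_closedBall_eq_hasDerivWithinAt_lipschitzOnWith
  refine ⟨α, fun x hx => ⟨(hα x hx).1, (hα x hx).2, ?_⟩, fun t ht => (hL' t ht).continuousOn⟩
  exact (convex_Icc t₀ T).lipschitzOnWith_of_nnnorm_hasDerivWithin_le (hα x hx).2
    fun t ht => by simpa [← NNReal.coe_le_coe] using hbound t ht (α x t)

theorem ContinuousOn.comp_fst_prod {α β γ : Type*} [TopologicalSpace α] [TopologicalSpace β]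
    [TopologicalSpace γ] {f : α → γ} {s : Set α} (hf : ContinuousOn f s) (t : Set β) :
    ContinuousOn (fun q : α × β => f q.1) (s ×ˢ t) :=
  hf.comp continuousOn_fst fun _ hq => hq.1

section AbelField

variable {a b c d : ℝ → ℝ} {t₀ T K t x : ℝ}

noncomputable def abelField (a b c d : ℝ → ℝ) (t x : ℝ) : ℝ :=
  -(a t * x ^ 3 + b t * x ^ 2 + c t * x + d t)

theorem abelRHS_eq_abelField (y : ℝ → ℝ) :
    abelRHS a b c d y t = abelField a b c d t (y t) := rfl

theorem hasDerivAt_abelField :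
    HasDerivAt (abelField a b c d t) (-(3 * a t * x ^ 2 + 2 * b t * x + c t)) x :=
  (((((hasDerivAt_pow 3 x).const_mul (a t)).add ((hasDerivAt_pow 2 x).const_mul (b t))).add
    ((hasDerivAt_id' x).const_mul (c t))).add_const (d t)).neg.congr_deriv (by ring)

/-- Completing the square: for `a > 0` and `x ≤ 0`,
`4a (a x³ + b x²) = -b² x + x (2 a x + b)² ≤ -b² x`. -/
theorem neg_abelField_le (ha : 0 < a t) (hx : x ≤ 0) :
    -abelField a b c d t x ≤ (b t ^ 2 / (4 * a t) - c t) * (-x) + d t := by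
  have key : a t * x ^ 3 + b t * x ^ 2 ≤ b t ^ 2 / (4 * a t) * (-x) := by
    rw [div_mul_eq_mul_div, le_div_iff₀ (by positivity)]
    nlinarith [mul_nonneg (neg_nonneg.2 hx) (sq_nonneg (2 * a t * x + b t))]
  simp only [abelField]
  linarith

theorem continuousOn_abelField_uncurry (ha : ContinuousOn a (Icc t₀ T))
    (hb : ContinuousOn b (Icc t₀ T)) (hc : ContinuousOn c (Icc t₀ T))
    (hd : ContinuousOn d (Icc t₀ T)) (s : Set ℝ) :
    ContinuousOn (fun q : ℝ × ℝ => abelField a b c d q.1 q.2) (Icc t₀ T ×ˢ s) := by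
  have hx : ContinuousOn (fun q : ℝ × ℝ => q.2) (Icc t₀ T ×ˢ s) := continuousOn_snd
  exact (((((ha.comp_fst_prod s).mul (hx.pow 3)).add ((hb.comp_fst_prod s).mul (hx.pow 2))).add
    ((hc.comp_fst_prod s).mul hx)).add (hd.comp_fst_prod s)).neg

theorem exists_lipschitzOnWith_abelField (ha : ContinuousOn a (Icc t₀ T))
    (hb : ContinuousOn b (Icc t₀ T)) (hc : ContinuousOn c (Icc t₀ T)) {s : Set ℝ}
    (hs : IsCompact s) (hs' : Convex ℝ s) :
    ∃ L : ℝ≥0, ∀ t ∈ Icc t₀ T, LipschitzOnWith L (abelField a b c d t) s := by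
  have hx : ContinuousOn (fun q : ℝ × ℝ => q.2) (Icc t₀ T ×ˢ s) := continuousOn_snd
  have hderiv : ContinuousOn (fun q : ℝ × ℝ => -(3 * a q.1 * q.2 ^ 2 + 2 * b q.1 * q.2 + c q.1))
      (Icc t₀ T ×ˢ s) :=
    ((((continuousOn_const.mul (ha.comp_fst_prod s)).mul (hx.pow 2)).add
      ((continuousOn_const.mul (hb.comp_fst_prod s)).mul hx)).add (hc.comp_fst_prod s)).neg
  obtain ⟨L, hL⟩ := (isCompact_Icc.prod hs).exists_bound_of_continuousOn hderiv
  refine ⟨L.toNNReal, fun t ht => hs'.lipschitzOnWith_of_nnnorm_hasDerivWithin_le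
    (fun x _ => hasDerivAt_abelField.hasDerivWithinAt) fun x hx => ?_⟩
  rw [← NNReal.coe_le_coe, coe_nnnorm]
  exact (hL (t, x) ⟨ht, hx⟩).trans (Real.le_coe_toNNReal L)

/-- Clamping the state to `[-K, 0]` makes the field bounded and globally Lipschitz, so that its
solutions exist on the whole of `[t₀, T]`. -/
noncomputable def truncAbelField (a b c d : ℝ → ℝ) (K t x : ℝ) : ℝ :=
  abelField a b c d t (max (-K) (min x 0))

def IsTruncAbelSolOn (a b c d : ℝ → ℝ) (K : ℝ) (y : ℝ → ℝ) (S : Set ℝ) : Prop :=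
  ∀ t ∈ S, HasDerivWithinAt y (truncAbelField a b c d K t (y t)) S t

theorem max_neg_min_mem_Icc (hK : 0 ≤ K) (x : ℝ) : max (-K) (min x 0) ∈ Icc (-K) 0 :=
  ⟨le_max_left _ _, max_le (neg_nonpos.2 hK) (min_le_right _ _)⟩

theorem truncAbelField_of_mem_Icc (hx : x ∈ Icc (-K) 0) :
    truncAbelField a b c d K t x = abelField a b c d t x := by
  rw [truncAbelField, min_eq_left hx.2, max_eq_right hx.1]

theorem truncAbelField_of_nonneg (hK : 0 ≤ K) (hx : 0 ≤ x) :
    truncAbelField a b c d K t x = -d t := by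
  simp [truncAbelField, abelField, min_eq_right hx, max_eq_right (neg_nonpos.2 hK)]

theorem exists_lipschitzWith_truncAbelField (ha : ContinuousOn a (Icc t₀ T))
    (hb : ContinuousOn b (Icc t₀ T)) (hc : ContinuousOn c (Icc t₀ T)) (hK : 0 ≤ K) :
    ∃ L : ℝ≥0, ∀ t ∈ Icc t₀ T, LipschitzWith L (truncAbelField a b c d K t) := by
  obtain ⟨L, hL⟩ := exists_lipschitzOnWith_abelField (d := d) ha hb hc isCompact_Icc
    (convex_Icc (-K) 0)
  have hclamp : LipschitzWith 1 fun x : ℝ => max (-K) (min x 0) :=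
    (LipschitzWith.id.min_const 0).const_max (-K)
  exact ⟨L * 1, fun t ht => lipschitzOnWith_univ.1
    ((hL t ht).comp hclamp.lipschitzOnWith fun x _ => max_neg_min_mem_Icc hK x)⟩

theorem exists_norm_truncAbelField_le (ha : ContinuousOn a (Icc t₀ T))
    (hb : ContinuousOn b (Icc t₀ T)) (hc : ContinuousOn c (Icc t₀ T))
    (hd : ContinuousOn d (Icc t₀ T)) (hK : 0 ≤ K) :
    ∃ C : ℝ≥0, ∀ t ∈ Icc t₀ T, ∀ x, ‖truncAbelField a b c d K t x‖ ≤ C := by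
  obtain ⟨C, hC⟩ := (isCompact_Icc.prod isCompact_Icc).exists_bound_of_continuousOn
    (continuousOn_abelField_uncurry ha hb hc hd (Icc (-K) 0))
  exact ⟨C.toNNReal, fun t ht x =>
    (hC (t, _) ⟨ht, max_neg_min_mem_Icc hK x⟩).trans (Real.le_coe_toNNReal C)⟩

theorem exists_truncAbelField_flow (ha : ContinuousOn a (Icc t₀ T))
    (hb : ContinuousOn b (Icc t₀ T)) (hc : ContinuousOn c (Icc t₀ T))
    (hd : ContinuousOn d (Icc t₀ T)) (hT : t₀ ≤ T) (hK : 0 ≤ K) (R : ℝ≥0) :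
    ∃ Y : ℝ → ℝ → ℝ, (∀ s ∈ Metric.closedBall 0 R, Y s t₀ = s ∧
      IsTruncAbelSolOn a b c d K (Y s) (Icc t₀ T) ∧
      AbsolutelyContinuousOnInterval (Y s) t₀ T) ∧
      ContinuousOn (Y · T) (Metric.closedBall 0 R) := by
  obtain ⟨L, hL⟩ := exists_lipschitzWith_truncAbelField (d := d) ha hb hc hK
  obtain ⟨C, hC⟩ := exists_norm_truncAbelField_le ha hb hc hd hK
  have hcont (x : ℝ) : ContinuousOn (truncAbelField a b c d K · x) (Icc t₀ T) :=
    (continuousOn_abelField_uncurry ha hb hc hd univ).comp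
      (continuousOn_id.prodMk continuousOn_const) fun t ht => ⟨ht, trivial⟩
  obtain ⟨Y, hY, hYT⟩ := exists_flow_of_lipschitzWith_of_norm_le hT hL hcont hC 0 R
  refine ⟨Y, fun s hs => ⟨(hY s hs).1, (hY s hs).2.1, ?_⟩, hYT T (right_mem_Icc.2 hT)⟩
  exact LipschitzOnWith.absolutelyContinuousOnInterval
    (by simpa [uIcc_of_le hT] using (hY s hs).2.2)

end AbelField

noncomputable def abelExponent (a b c : ℝ → ℝ) (t₀ t : ℝ) : ℝ :=
  ∫ s in t₀..t, (b s ^ 2 / (4 * a s) - c s)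

theorem abelExponent_eq_neg_integral (a b c : ℝ → ℝ) (t₀ t : ℝ) :
    abelExponent a b c t₀ t = -∫ s in t₀..t, (c s - b s ^ 2 / (4 * a s)) := by
  simp only [abelExponent, ← intervalIntegral.integral_neg, neg_sub]

theorem intervalIntegrable_abelKernel {a b c : ℝ → ℝ} {t₀ T : ℝ} (hT : t₀ ≤ T)
    (hint : IntegrableOn (fun t => b t ^ 2 / a t) (Icc t₀ T)) (hc : ContinuousOn c (Icc t₀ T)) :
    IntervalIntegrable (fun t => b t ^ 2 / (4 * a t) - c t) volume t₀ T := by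
  have : IntegrableOn (fun t => b t ^ 2 / a t / 4 - c t) (Icc t₀ T) :=
    (hint.div_const 4).sub hc.integrableOn_Icc
  exact (intervalIntegrable_iff_integrableOn_Icc_of_le hT).2 <|
    this.congr_fun (fun t _ => by simp only [div_div, mul_comm]) measurableSet_Icc

theorem continuousOn_abelExponent {a b c : ℝ → ℝ} {t₀ T : ℝ} (hT : t₀ ≤ T)
    (hχ : IntervalIntegrable (fun t => b t ^ 2 / (4 * a t) - c t) volume t₀ T) :
    ContinuousOn (abelExponent a b c t₀) (Icc t₀ T) :=
  uIcc_of_le hT ▸ (hχ.absolutelyContinuousOnInterval_intervalIntegral left_mem_uIcc).continuousOn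

section TruncatedSolution

variable {a b c d y : ℝ → ℝ} {t₀ T K : ℝ}

theorem neg_mul_exp_abelExponent_le {τ : ℝ} (hτ : t₀ ≤ τ)
    (hapos : ∀ᵐ t ∂volume.restrict (Icc t₀ τ), 0 < a t)
    (hχ : IntervalIntegrable (fun t => b t ^ 2 / (4 * a t) - c t) volume t₀ τ)
    (hd : IntervalIntegrable d volume t₀ τ) (hy : AbsolutelyContinuousOnInterval y t₀ τ)
    (hy' : ∀ t ∈ Ioo t₀ τ, HasDerivAt y (abelField a b c d t (y t)) t)
    (hy₀ : ∀ t ∈ Ioo t₀ τ, y t ≤ 0) :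
    -y τ * exp (-abelExponent a b c t₀ τ) ≤
      -y t₀ + ∫ t in t₀..τ, d t * exp (-abelExponent a b c t₀ t) := by
  refine hy.fun_neg.mul_exp_neg_integral_le hτ hχ hd ?_
  have hIoo : ∀ᵐ t ∂volume.restrict (Icc t₀ τ), t ∈ Ioo t₀ τ := by
    rw [← Measure.restrict_congr_set Ioo_ae_eq_Icc]
    exact ae_restrict_mem measurableSet_Ioo
  filter_upwards [hapos, hIoo] with t hat ht
  rw [(hy' t ht).fun_neg.deriv]
  exact neg_abelField_le hat (hy₀ t ht)

theorem hasDerivAt_of_truncAbelSol (hy : IsTruncAbelSolOn a b c d K y (Icc t₀ T)) {t : ℝ}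
    (ht : t ∈ Ioo t₀ T) (hyt : y t ∈ Icc (-K) 0) :
    HasDerivAt y (abelField a b c d t (y t)) t := by
  rw [← truncAbelField_of_mem_Icc hyt]
  exact (hy t (Ioo_subset_Icc_self ht)).hasDerivAt (Icc_mem_nhds ht.1 ht.2)

theorem isAbelSolOn_of_truncAbelSol (hy : IsTruncAbelSolOn a b c d K y (Icc t₀ T))
    (hbd : ∀ t ∈ Icc t₀ T, y t ∈ Icc (-K) 0) :
    IsAbelSolOn a b c d y (Icc t₀ T) := fun t ht => by
  rw [abelRHS_eq_abelField, ← truncAbelField_of_mem_Icc (hbd t ht)]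
  exact hy t ht

theorem truncAbelSol_nonpos (hy : IsTruncAbelSolOn a b c d K y (Icc t₀ T)) (hK : 0 ≤ K)
    (hd₀ : ∀ t ∈ Icc t₀ T, 0 ≤ d t) (hy₀ : y t₀ ≤ 0) :
    ∀ t ∈ Icc t₀ T, y t ≤ 0 :=
  image_nonpos_of_deriv_right_nonpos (fun t ht => (hy t ht).continuousWithinAt)
    (fun t ht => (hy t (Ico_subset_Icc_self ht)).mono_of_mem_nhdsWithin (Icc_mem_nhdsGE_of_mem ht))
    hy₀ fun t ht hyt => by
      rw [truncAbelField_of_nonneg hK hyt]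
      exact neg_nonpos.2 (hd₀ t (Ico_subset_Icc_self ht))

theorem neg_truncAbelSol_le (hy : IsTruncAbelSolOn a b c d K y (Icc t₀ T))
    (hapos : ∀ᵐ t ∂volume.restrict (Icc t₀ T), 0 < a t)
    (hχ : IntervalIntegrable (fun t => b t ^ 2 / (4 * a t) - c t) volume t₀ T)
    (hd : ContinuousOn d (Icc t₀ T)) (hd₀ : ∀ t ∈ Icc t₀ T, 0 ≤ d t)
    (hyAC : AbsolutelyContinuousOnInterval y t₀ T) {τ : ℝ} (hτ : τ ∈ Icc t₀ T)
    (hbox : ∀ t ∈ Ioo t₀ τ, y t ∈ Icc (-K) 0) :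
    -y τ ≤ (-y t₀ + ∫ t in t₀..T, d t * exp (-abelExponent a b c t₀ t)) *
      exp (abelExponent a b c t₀ τ) := by
  have hsub : Icc t₀ τ ⊆ Icc t₀ T := Icc_subset_Icc_right hτ.2
  have hsub' : uIcc t₀ τ ⊆ uIcc t₀ T := by
    simpa [uIcc_of_le hτ.1, uIcc_of_le (hτ.1.trans hτ.2)] using hsub
  have hgr := neg_mul_exp_abelExponent_le hτ.1 (ae_restrict_of_ae_restrict_of_subset hsub hapos)
    (hχ.mono_set hsub') ((hd.mono hsub).intervalIntegrable_of_Icc hτ.1) (hyAC.mono hsub')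
    (fun t ht => hasDerivAt_of_truncAbelSol hy ⟨ht.1, ht.2.trans_le hτ.2⟩ (hbox t ht))
    fun t ht => (hbox t ht).2
  have hJ : ∫ t in t₀..τ, d t * exp (-abelExponent a b c t₀ t) ≤
      ∫ t in t₀..T, d t * exp (-abelExponent a b c t₀ t) := by
    refine integral_mono_interval le_rfl hτ.1 hτ.2 ?_ ?_
    · exact (ae_restrict_iff' measurableSet_Ioc).2 (Eventually.of_forall fun t ht =>
        mul_nonneg (hd₀ t (Ioc_subset_Icc_self ht)) (exp_pos _).le)
    · exact (hd.intervalIntegrable_of_Icc (hτ.1.trans hτ.2)).mul_continuousOn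
        (uIcc_of_le (hτ.1.trans hτ.2) ▸ (continuousOn_abelExponent (hτ.1.trans hτ.2) hχ).neg.rexp)
  rw [exp_neg, ← div_eq_mul_inv, div_le_iff₀ (exp_pos _)] at hgr
  exact hgr.trans (mul_le_mul_of_nonneg_right (by linarith) (exp_pos _).le)

/-- Before `y` first reaches `-K` it solves the Abel equation itself, so the Grönwall estimate
applies there and keeps `y` strictly above `-K`. -/
theorem truncAbelSol_mem_Icc (hy : IsTruncAbelSolOn a b c d K y (Icc t₀ T))
    (hapos : ∀ᵐ t ∂volume.restrict (Icc t₀ T), 0 < a t)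
    (hχ : IntervalIntegrable (fun t => b t ^ 2 / (4 * a t) - c t) volume t₀ T)
    (hd : ContinuousOn d (Icc t₀ T)) (hd₀ : ∀ t ∈ Icc t₀ T, 0 ≤ d t) (hK₀ : 0 ≤ K)
    (hyAC : AbsolutelyContinuousOnInterval y t₀ T) (hy₀ : y t₀ ≤ 0)
    (hK : ∀ τ ∈ Icc t₀ T, (-y t₀ + ∫ t in t₀..T, d t * exp (-abelExponent a b c t₀ t)) *
      exp (abelExponent a b c t₀ τ) < K) :
    ∀ t ∈ Icc t₀ T, y t ∈ Icc (-K) 0 := by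
  have hnonpos := truncAbelSol_nonpos hy hK₀ hd₀ hy₀
  have hlow : ∀ t ∈ Icc t₀ T, -K < y t :=
    ContinuousOn.forall_lt_of_forall_Ico_lt (fun t ht => (hy t ht).continuousWithinAt)
      fun τ hτ hlow => by
        have := neg_truncAbelSol_le hy hapos hχ hd hd₀ hyAC hτ fun t ht =>
          ⟨(hlow t (Ioo_subset_Ico_self ht)).le, hnonpos t ⟨ht.1.le, (ht.2.trans_le hτ.2).le⟩⟩
        linarith [hK τ hτ]
  exact fun t ht => ⟨(hlow t ht).le, hnonpos t ht⟩

theorem truncAbelSol_mem_Icc_and_right_mem_Icc (hy : IsTruncAbelSolOn a b c d K y (Icc t₀ T))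
    (hapos : ∀ᵐ t ∂volume.restrict (Icc t₀ T), 0 < a t)
    (hχ : IntervalIntegrable (fun t => b t ^ 2 / (4 * a t) - c t) volume t₀ T)
    (hd : ContinuousOn d (Icc t₀ T)) (hd₀ : ∀ t ∈ Icc t₀ T, 0 ≤ d t) (hK₀ : 0 ≤ K)
    (hyAC : AbsolutelyContinuousOnInterval y t₀ T) (hT : t₀ ≤ T) {σ : ℝ} (hy₀ : y t₀ ∈ Icc σ 0)
    (hσ : ((∫ t in t₀..T, d t * exp (-abelExponent a b c t₀ t)) - σ) *
      exp (abelExponent a b c t₀ T) ≤ -σ)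
    (hK : ∀ τ ∈ Icc t₀ T, ((∫ t in t₀..T, d t * exp (-abelExponent a b c t₀ t)) - σ) *
      exp (abelExponent a b c t₀ τ) < K) :
    (∀ t ∈ Icc t₀ T, y t ∈ Icc (-K) 0) ∧ y T ∈ Icc σ 0 := by
  have hσy₀ : σ ≤ y t₀ := hy₀.1
  have hσy (τ : ℝ) := mul_le_mul_of_nonneg_right
    (by linarith : -y t₀ + ∫ t in t₀..T, d t * exp (-abelExponent a b c t₀ t) ≤
      (∫ t in t₀..T, d t * exp (-abelExponent a b c t₀ t)) - σ)
    (exp_pos (abelExponent a b c t₀ τ)).le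
  have hbox := truncAbelSol_mem_Icc hy hapos hχ hd hd₀ hK₀ hyAC hy₀.2 fun τ hτ =>
    (hσy τ).trans_lt (hK τ hτ)
  have hT_mem := right_mem_Icc.2 hT
  have := neg_truncAbelSol_le hy hapos hχ hd hd₀ hyAC hT_mem fun t ht =>
    hbox t (Ioo_subset_Icc_self ht)
  exact ⟨hbox, by linarith [hσy T], (hbox T hT_mem).2⟩

end TruncatedSolution

/-- Theorem 5.2: existence of a nonpositive closed solution of the Abel equation (1.1) on
`[t₀, T]` when `a > 0` a.e., `b²/a` is integrable, `∫ (c - b²/(4a)) > 0` and `d ≥ 0`. -/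
theorem stmt_12 (t₀ T : ℝ) (hT : t₀ < T)
    (a b c d : ℝ → ℝ)
    (ha : ContinuousOn a (Icc t₀ T)) (hb : ContinuousOn b (Icc t₀ T))
    (hc : ContinuousOn c (Icc t₀ T)) (hd : ContinuousOn d (Icc t₀ T))
    (hapos : ∀ᵐ t ∂(volume.restrict (Icc t₀ T)), 0 < a t)
    (hint : IntegrableOn (fun t => b t ^ 2 / a t) (Icc t₀ T))
    (h3 : 0 < ∫ t in t₀..T, (c t - b t ^ 2 / (4 * a t)))
    (h4 : ∀ t ∈ Icc t₀ T, 0 ≤ d t) :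
    ∃ y : ℝ → ℝ, IsAbelSolOn a b c d y (Icc t₀ T) ∧ y t₀ = y T ∧
      ∀ t ∈ Icc t₀ T, y t ≤ 0 := by
  have hχ := intervalIntegrable_abelKernel hT.le hint hc
  set Ψ := abelExponent a b c t₀
  set J := ∫ t in t₀..T, d t * exp (-Ψ t)
  have hJ : 0 ≤ J := integral_nonneg hT.le fun t ht => mul_nonneg (h4 t ht) (exp_pos _).le
  -- the Grönwall bound at `T` of solutions starting at `σ` is at most `-σ`
  obtain ⟨σ, hσ, hσJ⟩ := exists_nonpos_mul_le_neg hJ <|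
    exp_lt_one_iff.2 (by linarith [abelExponent_eq_neg_integral a b c t₀ T] :
      abelExponent a b c t₀ T < 0)
  obtain ⟨M, hM⟩ := isCompact_Icc.bddAbove_image (continuousOn_abelExponent hT.le hχ)
  set K := (J - σ) * exp M + 1
  have hK : 0 ≤ K := by
    have : 0 ≤ J - σ := by linarith
    positivity
  obtain ⟨Y, hY, hYT⟩ := exists_truncAbelField_flow ha hb hc hd hT.le hK (-σ).toNNReal
  have hball : Icc σ 0 ⊆ Metric.closedBall 0 (-σ).toNNReal := by
    rw [Real.closedBall_eq_Icc, Real.coe_toNNReal _ (by linarith)]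
    exact Icc_subset_Icc (by linarith) (by linarith)
  have hinv (s : ℝ) (hs : s ∈ Icc σ 0) :
      (∀ t ∈ Icc t₀ T, Y s t ∈ Icc (-K) 0) ∧ Y s T ∈ Icc σ 0 := by
    obtain ⟨hs₀, hsol, hAC⟩ := hY s (hball hs)
    refine truncAbelSol_mem_Icc_and_right_mem_Icc hsol hapos hχ hd h4 hK hAC hT.le (by rwa [hs₀])
      hσJ fun τ hτ => ?_
    have := exp_le_exp.2 (hM (mem_image_of_mem Ψ hτ))
    exact (mul_le_mul_of_nonneg_left this (by linarith)).trans_lt (lt_add_one _)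
  obtain ⟨s, hs, hfix⟩ := exists_mem_Icc_isFixedPt_of_mapsTo (hYT.mono hball) hσ
    fun s hs => (hinv s hs).2
  obtain ⟨hs₀, hsol, -⟩ := hY s (hball hs)
  exact ⟨Y s, isAbelSolOn_of_truncAbelSol hsol (hinv s hs).1, hs₀.trans hfix.symm,
    fun t ht => ((hinv s hs).1 t ht).2⟩
end
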